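/- Let E be the semilattice {1, e, f, 0} with ef = 0, and let U be the subgroupoid of the simplicial groupoid E × E given by U = {(x,y) : x ≠ 1 ≠ y} ∪ {(1,1)}, with actions x ▷ (y,z) = (xy,xz) and (x,y) ◁ z = (xz,yz). Then U is a pseudoregular groupoid whose ∗-operation satisfies (u,v) ∗ (x,y) = (ux, vy), and the identity arrow (0,0) at the vertex 0 is not an identity element of the semigroup (star₀(U), ∗), where star₀(U) = {(0,e), (0,f), (0,0)}. -/

import Mathlib

/-- The semilattice `E = {1, e, f, 0}` with `e * f = 0`. -/
inductive E4 : Type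
  | one : E4
  | e : E4
  | f : E4
  | zero : E4
deriving DecidableEq

/-- Multiplication on `E4`: `1` is an identity, `e`, `f`, `0` are idempotent, and any
product of distinct elements of `{e, f, 0}` is `0`. -/
def E4.mul : E4 → E4 → E4
  | .one, x => x
  | x, .one => x
  | .e, .e => .e
  | .f, .f => .f
  | _, _ => .zero

instance : Mul E4 := ⟨E4.mul⟩
instance : One E4 := ⟨E4.one⟩

/-- The subgroupoid `U` of the simplicial groupoid `E × E`. -/
def U : Set (E4 × E4) :=
  {p | p.1 ≠ 1 ∧ p.2 ≠ 1} ∪ {(1, 1)}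

/-- Left action `x ▷ (y,z) = (xy, xz)`. -/
def actL (x : E4) (p : E4 × E4) : E4 × E4 := (x * p.1, x * p.2)

/-- Right action `(x,y) ◁ z = (xz, yz)`. -/
def actR (p : E4 × E4) (z : E4) : E4 × E4 := (p.1 * z, p.2 * z)

/-- Composition in the simplicial groupoid: `(a,b)(c,d) = (a,d)` (when `b = c`). -/
def sComp (p q : E4 × E4) : E4 × E4 := (p.1, q.2)

/-- The operation `α ∗ β = (α ◁ βd) ∘ (αr ▷ β)` on the simplicial groupoid, where
`d` and `r` are the projections. -/
def star (p q : E4 × E4) : E4 × E4 := sComp (actR p q.1) (actL p.2 q)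

/-- The star of the vertex `0`. -/
def star₀ : Set (E4 × E4) := {p ∈ U | p.1 = E4.zero}

theorem E4.mul_comm (a b : E4) : a * b = b * a := by
  cases a <;> cases b <;> rfl

theorem E4.mul_self (a : E4) : a * a = a := by
  cases a <;> rfl

theorem E4.one_mul (a : E4) : 1 * a = a := by
  cases a <;> rfl

theorem E4.mul_one (a : E4) : a * 1 = a := by
  cases a <;> rfl

theorem E4.zero_mul (a : E4) : E4.zero * a = E4.zero := by
  cases a <;> rfl

theorem E4.mul_eq_one_iff {a b : E4} : a * b = 1 ↔ a = 1 ∧ b = 1 := by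
  cases a <;> cases b <;> decide

theorem mem_U_iff {p : E4 × E4} : p ∈ U ↔ (p.1 = 1 ↔ p.2 = 1) := by
  simp only [U, Set.mem_union, Set.mem_ofPred_eq, Set.mem_singleton_iff, Prod.ext_iff]
  tauto

-- Since `1` is the only unit of `E4`, both actions preserve the condition `p.1 = 1 ↔ p.2 = 1`.
theorem actL_mem_U (x : E4) {p : E4 × E4} (hp : p ∈ U) : actL x p ∈ U := by
  rw [mem_U_iff] at hp ⊢
  simp only [actL, E4.mul_eq_one_iff]
  exact and_congr_right' hp

theorem actR_mem_U (x : E4) {p : E4 × E4} (hp : p ∈ U) : actR p x ∈ U := by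
  rw [mem_U_iff] at hp ⊢
  simp only [actR, E4.mul_eq_one_iff]
  exact and_congr_left' hp

theorem star_eq_mul (p q : E4 × E4) : star p q = (p.1 * q.1, p.2 * q.2) :=
  rfl

theorem star_zero_zero_left (q : E4 × E4) : star (E4.zero, E4.zero) q = (E4.zero, E4.zero) := by
  simp only [star_eq_mul, E4.zero_mul]

theorem star₀_eq : star₀ = {(E4.zero, E4.e), (E4.zero, E4.f), (E4.zero, E4.zero)} := by
  ext ⟨a, b⟩
  simp only [star₀, mem_U_iff, Set.mem_insert_iff, Set.mem_singleton_iff, Prod.mk.injEq]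
  cases a <;> cases b <;> decide

/-- `E4` is a commutative idempotent monoid (hence an inverse monoid), `U`
is closed under the `E4`-actions (so `U` is a pseudoregular groupoid), the `∗`-operation
satisfies `(u,v) ∗ (x,y) = (ux, vy)`, the star at `0` is `{(0,e), (0,f), (0,0)}`, and
the identity arrow `(0,0)` is not an identity element of `(star₀, ∗)`. -/
theorem stmt8 :
    (∀ a b : E4, a * b = b * a) ∧ (∀ a : E4, a * a = a) ∧
    (∀ a : E4, 1 * a = a ∧ a * 1 = a) ∧
    (∀ p ∈ U, ∀ x : E4, actL x p ∈ U ∧ actR p x ∈ U) ∧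
    (∀ p q : E4 × E4, star p q = (p.1 * q.1, p.2 * q.2)) ∧
    (star₀ = {(E4.zero, E4.e), (E4.zero, E4.f), (E4.zero, E4.zero)}) ∧
    ¬ (∀ a ∈ star₀, star (E4.zero, E4.zero) a = a ∧ star a (E4.zero, E4.zero) = a) := by
  refine ⟨E4.mul_comm, E4.mul_self, fun a => ⟨E4.one_mul a, E4.mul_one a⟩,
    fun p hp x => ⟨actL_mem_U x hp, actR_mem_U x hp⟩, star_eq_mul, star₀_eq, ?_⟩
  intro h
  -- `(0,0)` absorbs every arrow under `∗`, so it cannot fix `(0,e)`.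
  have hfix := (h (E4.zero, E4.e) (by simp [star₀_eq])).1
  simp [star_zero_zero_left] at hfix
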